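/- arXiv:2604.12684 — 3 statements merged into one kernel-verified Lean document; each statement's English description precedes it below -/
import Mathlib

section
/- Let F be a field, let n, k, s be positive integers with k ≤ s, and let C₁ ⊇ C₂ ⊇ ⋯ ⊇ C_k be nested linear subspaces of Fⁿ such that every nonzero codeword of C_i has Hamming weight at least d_i (for given positive integers d₁, …, d_k). Let A be a k × s matrix over F that is non-singular by columns (NSC). Then every nonzero codeword of the matrix-product code C(A) has Hamming weight at least min_{1 ≤ i ≤ k} (s + 1 − i) · d_i. -/
/-!
Let `r` be the last index with `c r ≠ 0`. At a coordinate `t` in the support of `c r`, the column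
`(x j t)_j` is `w ᵥ* A` for the vector `w = (c i t)_i`, which is supported on the first `r + 1` rows
with `w r ≠ 0`. If `r + 1` of its entries vanished, the vector `(w 0, …, w r)` would be killed by an
invertible `(r + 1) × (r + 1)` submatrix of `A`, so at least `s - r` of them are nonzero. Summing
over the at least `d r` coordinates in the support of `c r` gives `hwtTuple x ≥ (s - r) · d r`.
-/

open Matrix

/-- Hamming weight of a vector in `Fⁿ`: number of nonzero coordinates. -/
def hwt {F : Type*} [Field F] [DecidableEq F] {n : ℕ} (v : Fin n → F) : ℕ :=
  (Finset.univ.filter fun t => v t ≠ 0).card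

/-- Hamming weight of an element of `(Fⁿ)ˢ`: number of nonzero coordinates among
all `s·n` coordinates. -/
def hwtTuple {F : Type*} [Field F] [DecidableEq F] {n s : ℕ}
    (x : Fin s → (Fin n → F)) : ℕ :=
  (Finset.univ.filter fun p : Fin s × Fin n => x p.1 p.2 ≠ 0).card

open Finset

theorem vecMul_submatrix_castLE {R ι : Type*} [Semiring R] {k m p : ℕ} (A : Matrix (Fin k) ι R)
    (w : Fin k → R) (hm : m ≤ k) (hw : ∀ i : Fin k, m ≤ i.val → w i = 0) (cols : Fin p → ι) :
    (w ∘ Fin.castLE hm) ᵥ* A.submatrix (Fin.castLE hm) cols = (w ᵥ* A) ∘ cols := by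
  funext l
  refine Fintype.sum_of_injective (Fin.castLE hm) (Fin.castLE_injective hm) _ _
    (fun i hi => ?_) (fun _ => rfl)
  have hmi : m ≤ i.val := by
    by_contra! h
    exact hi ⟨⟨i, h⟩, rfl⟩
  simp [hw i hmi]

section VecMul

variable {F ι : Type*} [Field F] [DecidableEq F] [Fintype ι] [LinearOrder ι] {k : ℕ}

theorem card_filter_vecMul_eq_zero_lt {m : ℕ} (A : Matrix (Fin k) ι F) (hm : m ≤ k)
    (hA : ∀ cols : Fin m → ι, StrictMono cols → IsUnit (A.submatrix (Fin.castLE hm) cols))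
    (w : Fin k → F) (hw : ∀ i : Fin k, m ≤ i.val → w i = 0) (hw₀ : w ∘ Fin.castLE hm ≠ 0) :
    #{j | (w ᵥ* A) j = 0} < m := by
  by_contra! h
  set cols := (univ.filter fun j => (w ᵥ* A) j = 0).orderEmbOfCardLe h
  have hkill : (w ∘ Fin.castLE hm) ᵥ* A.submatrix (Fin.castLE hm) cols = 0 := by
    rw [vecMul_submatrix_castLE A w hm hw]
    funext l
    exact (mem_filter.1 (orderEmbOfCardLe_mem _ h l)).2
  exact hw₀ (vecMul_injective_iff_isUnit.2 (hA cols cols.strictMono)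
    (hkill.trans (zero_vecMul _).symm))

theorem card_sub_le_card_filter_vecMul_ne_zero (A : Matrix (Fin k) ι F) (r : Fin k)
    (hA : ∀ cols : Fin (r + 1) → ι, StrictMono cols →
      IsUnit (A.submatrix (Fin.castLE r.isLt) cols))
    (w : Fin k → F) (hr : w r ≠ 0) (hw : ∀ i, r < i → w i = 0) :
    Fintype.card ι - r ≤ #{j | (w ᵥ* A) j ≠ 0} := by
  have hw₀ : w ∘ Fin.castLE r.isLt ≠ 0 := fun h => hr (congrFun h ⟨r, r.val.lt_succ_self⟩)
  have hzeros := card_filter_vecMul_eq_zero_lt A r.isLt hA w hw hw₀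
  have hsplit := card_filter_add_card_filter_not (s := univ) fun j => (w ᵥ* A) j = 0
  rw [card_univ] at hsplit
  simp only [ne_eq]
  omega

end VecMul

theorem exists_ne_zero_forall_lt_eq_zero {ι M : Type*} [Fintype ι] [LinearOrder ι] [Zero M]
    (c : ι → M) (hc : c ≠ 0) : ∃ r, c r ≠ 0 ∧ ∀ i, r < i → c i = 0 := by
  classical
  obtain ⟨i, hi⟩ := Function.ne_iff.1 hc
  obtain ⟨r, hr, hmax⟩ := exists_max_image {i | c i ≠ 0} id ⟨i, by simpa using hi⟩
  exact ⟨r, (mem_filter.1 hr).2, fun i hri => by_contra fun h =>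
    (hmax i (mem_filter.2 ⟨mem_univ i, h⟩)).not_gt hri⟩

section Weight

variable {F : Type*} [Field F] [DecidableEq F] {n s : ℕ}

theorem hwtTuple_eq_sum_card (x : Fin s → Fin n → F) :
    hwtTuple x = ∑ t, #{j | x j t ≠ 0} := by
  simp only [hwtTuple, card_filter]
  exact Fintype.sum_prod_type_right _

theorem mul_hwt_le_hwtTuple {m : ℕ} (v : Fin n → F) (x : Fin s → Fin n → F)
    (h : ∀ t, v t ≠ 0 → m ≤ #{j | x j t ≠ 0}) : m * hwt v ≤ hwtTuple x := by
  rw [hwtTuple_eq_sum_card, hwt, mul_comm, ← smul_eq_mul]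
  calc #{t | v t ≠ 0} • m ≤ ∑ t ∈ {t | v t ≠ 0}, #{j | x j t ≠ 0} :=
        card_nsmul_le_sum _ _ _ fun t ht => h t (mem_filter.1 ht).2
    _ ≤ ∑ t, #{j | x j t ≠ 0} := sum_le_sum_of_subset (subset_univ _)

end Weight

theorem stmt8_general (F : Type*) [Field F] [DecidableEq F] (n k s : ℕ)
    (hk : 0 < k)
    (A : Matrix (Fin k) (Fin s) F)
    -- A is non-singular by columns (NSC): for every `1 ≤ j ≤ k` and every strictly
    -- increasing choice of `j` columns, the `j × j` submatrix formed by the first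
    -- `j` rows and those columns is invertible.
    (hNSC : ∀ (j : ℕ) (hj : j ≤ k), 0 < j → ∀ cols : Fin j → Fin s, StrictMono cols →
      IsUnit (A.submatrix (Fin.castLE hj) cols))
    (C : Fin k → Submodule F (Fin n → F)) (d : Fin k → ℕ)
    -- every nonzero codeword of C_i has Hamming weight at least d_i
    (hwtC : ∀ i : Fin k, ∀ v ∈ C i, v ≠ 0 → d i ≤ hwt v) :
    ∀ x : Fin s → (Fin n → F),
      (∃ c : Fin k → (Fin n → F), (∀ i, c i ∈ C i) ∧
        ∀ j : Fin s, x j = ∑ i : Fin k, A i j • c i) →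
      x ≠ 0 →
      Finset.univ.inf' (Finset.univ_nonempty_iff.mpr (Fin.pos_iff_nonempty.mp hk))
        (fun i : Fin k => (s + 1 - (i.val + 1)) * d i) ≤ hwtTuple x := by
  rintro x ⟨c, hc, hx⟩ hx₀
  have hcol : ∀ t, (fun j => x j t) = (fun i => c i t) ᵥ* A := fun t => by
    funext j
    simp [hx, vecMul, dotProduct, Finset.sum_apply, mul_comm]
  have hc₀ : c ≠ 0 := by
    rintro rfl
    exact hx₀ (funext fun j => by simp [hx])
  obtain ⟨r, hcr, hlast⟩ := exists_ne_zero_forall_lt_eq_zero c hc₀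
  have hcount : ∀ t, c r t ≠ 0 → s - r ≤ #{j | x j t ≠ 0} := fun t ht => by
    simpa [← hcol t] using card_sub_le_card_filter_vecMul_ne_zero A r
      (hNSC (r + 1) r.isLt r.val.succ_pos) (fun i => c i t) ht fun i hi => congrFun (hlast i hi) t
  calc univ.inf' _ (fun i : Fin k => (s + 1 - (i.val + 1)) * d i)
      ≤ (s + 1 - (r.val + 1)) * d r := inf'_le _ (mem_univ r)
    _ = (s - r) * d r := by rw [Nat.add_sub_add_right]
    _ ≤ (s - r) * hwt (c r) := Nat.mul_le_mul_left _ (hwtC r _ (hc r) hcr)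
    _ ≤ hwtTuple x := mul_hwt_le_hwtTuple _ x hcount

theorem stmt8 (F : Type*) [Field F] [DecidableEq F] (n k s : ℕ)
    (hn : 0 < n) (hk : 0 < k) (hs : 0 < s) (hks : k ≤ s)
    (A : Matrix (Fin k) (Fin s) F)
    -- A is non-singular by columns (NSC): for every `1 ≤ j ≤ k` and every strictly
    -- increasing choice of `j` columns, the `j × j` submatrix formed by the first
    -- `j` rows and those columns is invertible.
    (hNSC : ∀ (j : ℕ) (hj : j ≤ k), 0 < j → ∀ cols : Fin j → Fin s, StrictMono cols →
      IsUnit (A.submatrix (Fin.castLE hj) cols))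
    (C : Fin k → Submodule F (Fin n → F)) (d : Fin k → ℕ) (hd : ∀ i, 0 < d i)
    -- nested codes C₁ ⊇ C₂ ⊇ ⋯ ⊇ C_k
    (hnested : ∀ i i' : Fin k, i ≤ i' → C i' ≤ C i)
    -- every nonzero codeword of C_i has Hamming weight at least d_i
    (hwtC : ∀ i : Fin k, ∀ v ∈ C i, v ≠ 0 → d i ≤ hwt v) :
    ∀ x : Fin s → (Fin n → F),
      (∃ c : Fin k → (Fin n → F), (∀ i, c i ∈ C i) ∧
        ∀ j : Fin s, x j = ∑ i : Fin k, A i j • c i) →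
      x ≠ 0 →
      Finset.univ.inf' (Finset.univ_nonempty_iff.mpr (Fin.pos_iff_nonempty.mp hk))
        (fun i : Fin k => (s + 1 - (i.val + 1)) * d i) ≤ hwtTuple x :=
  stmt8_general F n k s hk A hNSC C d hwtC
end

section
/- In F₂⁵ × F₂⁵, let g₀ = (1,1,0,0,0 | 0,0,1,0,1) and let g_k = σᵏ(g₀) for k = 1, 2, 3, where σ is the simultaneous cyclic shift. Then the four vectors g₀, g₁, g₂, g₃ are linearly independent over F₂ and pairwise satisfy ω(g_k, g_l) = 0; hence their span S̄ is a totally isotropic subspace of F₂⁵ × F₂⁵ of dimension 4. -/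
/-- The phase space `F₂⁵ × F₂⁵`. -/
abbrev V5 : Type := (Fin 5 → ZMod 2) × (Fin 5 → ZMod 2)

/-- The binary symplectic form `ω((a|b), (a'|b')) = a ⬝ b' + a' ⬝ b`. -/
def omega5 (s s' : V5) : ZMod 2 :=
  (∑ i, s.1 i * s'.2 i) + (∑ i, s'.1 i * s.2 i)

/-- The simultaneous cyclic shift `σ(a|b)_i = (a_{i-1 mod 5} | b_{i-1 mod 5})`. -/
def sigma5 (s : V5) : V5 :=
  (fun i => s.1 (i - 1), fun i => s.2 (i - 1))

/-- The base stabilizer vector `g₀ = (1,1,0,0,0 | 0,0,1,0,1)`. -/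
def g0 : V5 := (![1, 1, 0, 0, 0], ![0, 0, 1, 0, 1])

theorem LinearMap.eq_zero_of_mem_span_of_mem_span {R M N P : Type*} [CommSemiring R]
    [AddCommMonoid M] [AddCommMonoid N] [AddCommMonoid P] [Module R M] [Module R N] [Module R P]
    {B : M →ₗ[R] N →ₗ[R] P} {s : Set M} {t : Set N} (h : ∀ x ∈ s, ∀ y ∈ t, B x y = 0)
    {x : M} (hx : x ∈ Submodule.span R s) {y : N} (hy : y ∈ Submodule.span R t) :
    B x y = 0 :=
  LinearMap.eqOn_span (f := B.flip y) (g := 0)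
    (fun x' hx' => LinearMap.eqOn_span (f := B x') (g := 0) (h x' hx') hy) hx

def omega5Bilin : LinearMap.BilinForm (ZMod 2) V5 :=
  LinearMap.mk₂ (ZMod 2) omega5
    (fun _ _ _ => by simp only [omega5, Prod.fst_add, Prod.snd_add, Pi.add_apply, add_mul,
      mul_add, Finset.sum_add_distrib]; ring)
    (fun _ _ _ => by simp only [omega5, Prod.smul_fst, Prod.smul_snd, Pi.smul_apply, smul_eq_mul,
      Finset.mul_sum, mul_add, mul_assoc, mul_left_comm])
    (fun _ _ _ => by simp only [omega5, Prod.fst_add, Prod.snd_add, Pi.add_apply, add_mul,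
      mul_add, Finset.sum_add_distrib]; ring)
    (fun _ _ _ => by simp only [omega5, Prod.smul_fst, Prod.smul_snd, Pi.smul_apply, smul_eq_mul,
      Finset.mul_sum, mul_add, mul_assoc, mul_left_comm])

theorem linearIndependent_iterate_sigma5_g0 :
    LinearIndependent (ZMod 2) (fun k : Fin 4 => sigma5^[k] g0) := by
  rw [Fintype.linearIndependent_iff]
  decide

theorem omega5_iterate_sigma5_g0 (k l : Fin 4) :
    omega5 (sigma5^[k] g0) (sigma5^[l] g0) = 0 := by
  revert k l
  decide

theorem stmt9 :
    LinearIndependent (ZMod 2) (fun k : Fin 4 => sigma5^[k] g0) ∧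
    (∀ k l : Fin 4, omega5 (sigma5^[k] g0) (sigma5^[l] g0) = 0) ∧
    (∀ s ∈ Submodule.span (ZMod 2) (Set.range fun k : Fin 4 => sigma5^[k] g0),
      ∀ s' ∈ Submodule.span (ZMod 2) (Set.range fun k : Fin 4 => sigma5^[k] g0),
        omega5 s s' = 0) ∧
    Module.finrank (ZMod 2)
      (Submodule.span (ZMod 2) (Set.range fun k : Fin 4 => sigma5^[k] g0)) = 4 := by
  refine ⟨linearIndependent_iterate_sigma5_g0, omega5_iterate_sigma5_g0, ?_, ?_⟩
  · rintro s hs s' hs'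
    refine LinearMap.eq_zero_of_mem_span_of_mem_span (B := omega5Bilin) ?_ hs hs'
    rintro _ ⟨k, rfl⟩ _ ⟨l, rfl⟩
    exact omega5_iterate_sigma5_g0 k l
  · rw [finrank_span_eq_card linearIndependent_iterate_sigma5_g0, Fintype.card_fin]
end

section
/- Let p = 29 and define a, b ∈ F₂^{29} (indexed by Z/29Z) by a_i = 1 if and only if i is a nonzero quadratic residue modulo 29, and b_i = 1 if and only if i is nonzero and not a quadratic residue modulo 29. Let v₀ = (a | b) ∈ F₂^{29} × F₂^{29} and v_k = σᵏ(v₀) for k = 0, 1, …, 27, where σ is the simultaneous cyclic shift. Then the twenty-eight vectors v₀, …, v₂₇ are linearly independent over F₂, and the subspace S̄ they span is totally isotropic for the binary symplectic form; in particular dim S̄ = 28. -/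
/-- The phase space `F₂²⁹ × F₂²⁹`, indexed by `Z/29Z`. -/
abbrev V29 : Type := (ZMod 29 → ZMod 2) × (ZMod 29 → ZMod 2)

/-- The binary symplectic form `ω((a|b), (a'|b')) = a ⬝ b' + a' ⬝ b`. -/
def omega29 (s s' : V29) : ZMod 2 :=
  (∑ i, s.1 i * s'.2 i) + (∑ i, s'.1 i * s.2 i)

/-- The simultaneous cyclic shift `σ(a|b)_i = (a_{i-1} | b_{i-1})`. -/
def sigma29 (s : V29) : V29 :=
  (fun i => s.1 (i - 1), fun i => s.2 (i - 1))

/-- `a_i = 1` iff `i` is a nonzero quadratic residue modulo 29. -/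
def aQR29 : ZMod 29 → ZMod 2 :=
  fun i => if i ≠ 0 ∧ ∃ x : ZMod 29, x ^ 2 = i then 1 else 0

/-- `b_i = 1` iff `i` is nonzero and not a quadratic residue modulo 29. -/
def bQR29 : ZMod 29 → ZMod 2 :=
  fun i => if i ≠ 0 ∧ ¬∃ x : ZMod 29, x ^ 2 = i then 1 else 0

/-- The base vector `v₀ = (a | b)`. -/
def v029 : V29 := (aQR29, bQR29)

/-!
View `F₂^{ℤ/29}` as the group algebra `F₂[ℤ/29]`, where `σᵏ` is convolution with `δₖ`.

Since `-1 = 12²` is a square mod 29, `a` and `b` are even functions, so the reflection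
`i ↦ k + l - i` swaps the two halves of `ω(σᵏv₀, σˡv₀)`; in characteristic 2 the form therefore
vanishes on the generators, hence on their span.

For independence, `a * b = 1 - δ₀`: every nonzero element is a residue plus a non-residue in
exactly 7 ways, and `0` in none. A relation `∑ gₖ σᵏ a = g * a = 0` thus gives
`g * (1 - δ₀) = (∑ g) - g = 0`, so `g` is constant; for a relation among `v₀, …, v₂₇` we have
`g₂₈ = 0`, hence `g = 0`.
-/

open Finset

section CyclicConvolution

variable {G R : Type*} [AddCommGroup G] [Fintype G] [CommRing R]

def cyclicConv (f g : G → R) : G → R := fun i => ∑ j, f j * g (i - j)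

theorem cyclicConv_assoc (f g h : G → R) :
    cyclicConv (cyclicConv f g) h = cyclicConv f (cyclicConv g h) := by
  funext i
  simp only [cyclicConv, sum_mul, mul_sum]
  rw [sum_comm]
  refine sum_congr rfl fun k _ => ?_
  exact Fintype.sum_equiv (Equiv.subRight k) _ _ fun j => by
    simp only [Equiv.subRight_apply, mul_assoc, sub_sub, add_sub_cancel]

theorem zero_cyclicConv (g : G → R) : cyclicConv 0 g = 0 := by
  funext i
  simp [cyclicConv]

theorem cyclicConv_ite_eq_zero [DecidableEq G] (g : G → R) (i : G) :
    cyclicConv g (fun j => if j = 0 then 0 else 1) i = (∑ j, g j) - g i := by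
  simp only [cyclicConv, mul_ite, mul_zero, mul_one, sub_eq_zero]
  rw [eq_sub_iff_add_eq, ← Fintype.sum_ite_eq i g, ← sum_add_distrib]
  exact sum_congr rfl fun j _ => by split_ifs <;> simp

theorem eq_of_cyclicConv_eq_zero [DecidableEq G] {a b g : G → R}
    (hab : cyclicConv a b = fun j => if j = 0 then 0 else 1) (hg : cyclicConv g a = 0)
    (i j : G) : g i = g j := by
  have h := congrFun (cyclicConv_assoc g a b)
  simp only [hg, hab, zero_cyclicConv, cyclicConv_ite_eq_zero, Pi.zero_apply,
    eq_comm (a := (0 : R)), sub_eq_zero] at h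
  rw [← h i, h j]

theorem sum_comp_sub_mul_comp_sub_comm {a b : G → R} (ha : a.Even) (hb : b.Even) (k l : G) :
    ∑ i, a (i - k) * b (i - l) = ∑ i, a (i - l) * b (i - k) :=
  Fintype.sum_equiv (Equiv.subLeft (k + l)) _ _ fun i => by
    rw [Equiv.subLeft_apply, ← ha, ← hb]
    congr 2 <;> abel

end CyclicConvolution

section Translates

variable {R : Type*} [CommRing R] {n : ℕ}

theorem ZMod.sum_univ_eq_sum_fin_add {M : Type*} [AddCommMonoid M] (F : ZMod (n + 1) → M) :
    ∑ j, F j = ∑ k : Fin n, F (k : ℕ) + F n := by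
  let e := (ZMod.finEquiv (n + 1)).toEquiv
  have he : ∀ j : Fin (n + 1), e j = ((j : ℕ) : ZMod (n + 1)) := fun j => by
    rw [← ZMod.natCast_zmod_val (e j)]
    rfl
  rw [← e.sum_comp, Fin.sum_univ_castSucc]
  simp only [he, Fin.val_castSucc, Fin.val_last]

theorem linearIndependent_translates {a b : ZMod (n + 1) → R}
    (hab : cyclicConv a b = fun j => if j = 0 then 0 else 1) :
    LinearIndependent R fun k : Fin n => fun i => a (i - (k : ℕ)) := by
  rw [Fintype.linearIndependent_iff]
  intro g hg k
  let g' : ZMod (n + 1) → R := fun j => if h : j.val < n then g ⟨j.val, h⟩ else 0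
  have hg' : ∀ k : Fin n, g' (k : ℕ) = g k := fun k => by
    simp [g', ZMod.val_natCast_of_lt (k.isLt.trans n.lt_succ_self)]
  have hlast : g' n = 0 := by
    simp [g', ZMod.val_natCast_of_lt n.lt_succ_self]
  have hconv : cyclicConv g' a = 0 := funext fun i => by
    simpa [cyclicConv, ZMod.sum_univ_eq_sum_fin_add, hg', hlast] using congrFun hg i
  rw [← hg', eq_of_cyclicConv_eq_zero hab hconv _ n, hlast]

end Translates

theorem LinearMap.apply_eq_zero_of_mem_span {R M N P : Type*} [CommSemiring R]
    [AddCommMonoid M] [AddCommMonoid N] [AddCommMonoid P] [Module R M] [Module R N] [Module R P]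
    {B : M →ₗ[R] N →ₗ[R] P} {X : Set M} {Y : Set N} (h : ∀ x ∈ X, ∀ y ∈ Y, B x y = 0)
    {s : M} {t : N} (hs : s ∈ Submodule.span R X) (ht : t ∈ Submodule.span R Y) :
    B s t = 0 := by
  induction hs, ht using Submodule.span_induction₂ with
  | mem_mem x y hx hy => exact h x hx y hy
  | zero_left => simp
  | zero_right => simp
  | add_left => simp_all
  | add_right => simp_all
  | smul_left => simp_all
  | smul_right => simp_all

theorem exists_sq_eq_neg_iff {R : Type*} [CommRing R] (h : IsSquare (-1 : R)) (i : R) :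
    (∃ x : R, x ^ 2 = -i) ↔ ∃ x : R, x ^ 2 = i := by
  obtain ⟨c, hc⟩ := h
  have hc2 : ∀ x : R, (c * x) ^ 2 = -x ^ 2 := fun x => by rw [mul_pow, sq c, ← hc]; ring
  constructor
  · rintro ⟨x, hx⟩
    exact ⟨c * x, by rw [hc2, hx, neg_neg]⟩
  · rintro ⟨x, hx⟩
    exact ⟨c * x, by rw [hc2, hx]⟩

theorem isSquare_neg_one_zmod29 : IsSquare (-1 : ZMod 29) :=
  ⟨12, by decide⟩

theorem aQR29_even : aQR29.Even := fun i => by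
  simp only [aQR29, neg_ne_zero, exists_sq_eq_neg_iff isSquare_neg_one_zmod29]

theorem bQR29_even : bQR29.Even := fun i => by
  simp only [bQR29, neg_ne_zero, exists_sq_eq_neg_iff isSquare_neg_one_zmod29]

set_option maxRecDepth 10000 in
theorem cyclicConv_aQR29_bQR29 :
    cyclicConv aQR29 bQR29 = fun j => if j = 0 then 0 else 1 := by
  funext i
  revert i
  decide

theorem sigma29_iterate (n : ℕ) (s : V29) :
    sigma29^[n] s = (fun i => s.1 (i - n), fun i => s.2 (i - n)) := by
  induction n with
  | zero => simp
  | succ n ih =>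
    rw [Function.iterate_succ_apply', ih]
    simp only [sigma29, Nat.cast_succ, sub_sub, add_comm (1 : ZMod 29)]

theorem omega29_sigma29_iterate_v029 (k l : ℕ) :
    omega29 (sigma29^[k] v029) (sigma29^[l] v029) = 0 := by
  simp only [omega29, sigma29_iterate, v029]
  rw [sum_comp_sub_mul_comp_sub_comm aQR29_even bQR29_even]
  exact CharTwo.add_self_eq_zero _

def omega29Form : LinearMap.BilinForm (ZMod 2) V29 :=
  LinearMap.mk₂ (ZMod 2) omega29
    (fun _ _ _ => by
      simp only [omega29, Prod.fst_add, Prod.snd_add, Pi.add_apply, add_mul, mul_add,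
        sum_add_distrib]
      ring)
    (fun _ _ _ => by
      simp only [omega29, Prod.smul_fst, Prod.smul_snd, Pi.smul_apply, smul_eq_mul, mul_add,
        mul_sum, mul_assoc, mul_left_comm])
    (fun _ _ _ => by
      simp only [omega29, Prod.fst_add, Prod.snd_add, Pi.add_apply, add_mul, mul_add,
        sum_add_distrib]
      ring)
    (fun _ _ _ => by
      simp only [omega29, Prod.smul_fst, Prod.smul_snd, Pi.smul_apply, smul_eq_mul, mul_add,
        mul_sum, mul_assoc, mul_left_comm])

theorem linearIndependent_sigma29_iterate_v029 :
    LinearIndependent (ZMod 2) (fun k : Fin 28 => sigma29^[k] v029) := by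
  refine LinearIndependent.of_comp (LinearMap.fst (ZMod 2) _ _) ?_
  simpa [Function.comp_def, sigma29_iterate, v029] using
    linearIndependent_translates cyclicConv_aQR29_bQR29

theorem stmt14 :
    LinearIndependent (ZMod 2) (fun k : Fin 28 => sigma29^[k] v029) ∧
    (∀ s ∈ Submodule.span (ZMod 2) (Set.range fun k : Fin 28 => sigma29^[k] v029),
      ∀ s' ∈ Submodule.span (ZMod 2) (Set.range fun k : Fin 28 => sigma29^[k] v029),
        omega29 s s' = 0) ∧
    Module.finrank (ZMod 2)
      (Submodule.span (ZMod 2) (Set.range fun k : Fin 28 => sigma29^[k] v029)) = 28 := by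
  have hli := linearIndependent_sigma29_iterate_v029
  refine ⟨hli, ?_, by rw [finrank_span_eq_card hli, Fintype.card_fin]⟩
  intro s hs s' hs'
  refine LinearMap.apply_eq_zero_of_mem_span (B := omega29Form) ?_ hs hs'
  rintro _ ⟨k, rfl⟩ _ ⟨l, rfl⟩
  exact omega29_sigma29_iterate_v029 k l
end
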